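/- Let G1 be a connected δ1-regular graph on n vertices and G2 be a connected δ2-regular graph on δ1 vertices, and write κ1 = κ(G1) and λi = λ(Gi) for i = 1,2. If κ1 ≥ 2, then min{λ1, λ2+1} ≤ λ(G1®G2). -/

import Mathlib

open SimpleGraph

section Defs

variable {V : Type*}

/-- The set of edges of `G` with one endpoint in `X` and the other outside `X`. -/
def edgeBoundary (G : SimpleGraph V) (X : Set V) : Set (Sym2 V) :=
  {e | e ∈ G.edgeSet ∧ ∃ u ∈ X, ∃ v ∈ Xᶜ, e = s(u, v)}

/-- The edge-connectivity `λ(G)`: the minimum number of edges whose removal disconnects `G`. -/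
noncomputable def edgeConn (G : SimpleGraph V) : ℕ :=
  sInf {k | ∃ F : Set (Sym2 V), F ⊆ G.edgeSet ∧ F.ncard = k ∧ ¬(G.deleteEdges F).Connected}

/-- `F` is a restricted edge-cut of `G`: removing `F` disconnects `G` and leaves no
isolated vertices. -/
def IsRestrictedEdgeCut (G : SimpleGraph V) (F : Set (Sym2 V)) : Prop :=
  F ⊆ G.edgeSet ∧ ¬(G.deleteEdges F).Connected ∧ ∀ v : V, ∃ w : V, (G.deleteEdges F).Adj v w

/-- The restricted edge-connectivity `λ'(G)`. -/
noncomputable def restrictedEdgeConn (G : SimpleGraph V) : ℕ :=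
  sInf {k | ∃ F : Set (Sym2 V), IsRestrictedEdgeCut G F ∧ F.ncard = k}

/-- The vertex-connectivity `κ(G)`: the minimum size of a set of vertices whose removal
leaves a disconnected graph or a graph with at most one vertex. -/
noncomputable def vertexConn (G : SimpleGraph V) : ℕ :=
  sInf {k | ∃ S : Set V, S.ncard = k ∧
    (¬(G.induce (Sᶜ : Set V)).Connected ∨ (Sᶜ : Set V).ncard ≤ 1)}

/-- The minimum edge-degree `ξ(G) = min {d(u) + d(v) - 2 : uv ∈ E(G)}`. -/
noncomputable def minEdgeDegree (G : SimpleGraph V) : ℕ :=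
  sInf {k | ∃ u v : V, G.Adj u v ∧ (G.neighborSet u).ncard + (G.neighborSet v).ncard - 2 = k}

/-- `G` is `λ'`-optimal if `λ'(G) = ξ(G)`. -/
def LambdaPrimeOptimal (G : SimpleGraph V) : Prop :=
  restrictedEdgeConn G = minEdgeDegree G

/-- The replacement product of `G1` and `G2` with respect to an edge-labelling `ℓ`,
where `ℓ x i` is the other endpoint of the edge of `G1` labelled `i` at the vertex `x`.
Vertices `(x, i)` and `(y, j)` are adjacent iff either `x = y` and `i j ∈ E(G2)`, or
`x y ∈ E(G1)` and the edge `x y` is labelled `i` at `x` and `j` at `y`. -/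
def replacementProduct {V1 V2 : Type*} (G1 : SimpleGraph V1) (G2 : SimpleGraph V2)
    (ℓ : V1 → V2 → V1) : SimpleGraph (V1 × V2) where
  Adj p q := (p.1 = q.1 ∧ G2.Adj p.2 q.2) ∨
    (G1.Adj p.1 q.1 ∧ ℓ p.1 p.2 = q.1 ∧ ℓ q.1 q.2 = p.1)
  symm := by
    refine ⟨?_⟩
    rintro p q (⟨h1, h2⟩ | ⟨h1, h2, h3⟩)
    · exact Or.inl ⟨h1.symm, h2.symm⟩
    · exact Or.inr ⟨h1.symm, h3, h2⟩
  loopless := by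
    refine ⟨?_⟩
    rintro p (⟨_, h⟩ | ⟨h, _⟩)
    · exact G2.loopless.irrefl _ h
    · exact G1.loopless.irrefl _ h

/-- `ℓ` is a valid edge-labelling of `G1` for the replacement product:
for each vertex `x`, `ℓ x` is injective and `ℓ x i` is always a neighbour of `x`
(hence `ℓ x` enumerates the neighbours of `x` when `G1` is `|V2|`-regular). -/
def IsRPLabelling {V1 V2 : Type*} (G1 : SimpleGraph V1) (ℓ : V1 → V2 → V1) : Prop :=
  (∀ x, Function.Injective (ℓ x)) ∧ ∀ x i, G1.Adj x (ℓ x i)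

end Defs

/-! Let `F` be a set of edges whose removal disconnects `G1 ® G2` and `A` a component of what
remains, so that `F` contains the edge boundary of `A`. If `A` splits some cloud `{x} × V2`, that
boundary contains a cut of `G2` inside the cloud and, because `G1 - x` and `G2` are connected,
also an edge leaving the cloud: at least `λ2 + 1` edges. Otherwise `A` is a union of clouds and
its boundary projects onto a cut of `G1`, which has at least `λ1` edges. Regularity only ensures
that `ℓ x` enumerates all neighbours of `x`, so that every edge of `G1` occurs in `G1 ® G2`. -/

section EdgeConn

variable {W : Type*} {H : SimpleGraph W}

lemma SimpleGraph.Reachable.mem_of_closed_under_adj {A : Set W}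
    (hA : ∀ u v, H.Adj u v → u ∈ A → v ∈ A) {u v : W} (h : H.Reachable u v) (hu : u ∈ A) :
    v ∈ A := by
  by_contra hv
  obtain ⟨p⟩ := h
  obtain ⟨d, -, hd, hd'⟩ := p.exists_boundary_dart A hu hv
  exact hd' (hA _ _ d.adj hd)

lemma edgeConn_le_ncard_edgeBoundary {S : Set W} (hS : S.Nonempty) (hS' : Sᶜ.Nonempty) :
    edgeConn H ≤ (edgeBoundary H S).ncard := by
  refine Nat.sInf_le ⟨_, fun e he => he.1, rfl, fun hconn => ?_⟩
  obtain ⟨a, ha⟩ := hS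
  obtain ⟨b, hb⟩ := hS'
  refine hb ((hconn.preconnected a b).mem_of_closed_under_adj (fun u v huv hu => ?_) ha)
  by_contra hv
  exact (deleteEdges_adj.1 huv).2 ⟨(deleteEdges_adj.1 huv).1, u, hu, v, hv, rfl⟩

lemma le_edgeConn_of_forall_edgeBoundary [Finite W] [Nontrivial W] {k : ℕ}
    (h : ∀ S : Set W, S.Nonempty → Sᶜ.Nonempty → k ≤ (edgeBoundary H S).ncard) :
    k ≤ edgeConn H := by
  refine le_csInf ⟨_, H.edgeSet, subset_rfl, rfl, by simpa using not_connected_bot⟩ ?_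
  rintro _ ⟨F, -, rfl, hF⟩
  obtain ⟨a, b, hab⟩ : ∃ a b, ¬(H.deleteEdges F).Reachable a b := by
    by_contra! hreach
    exact hF (connected_iff _ |>.2 ⟨hreach, inferInstance⟩)
  set S : Set W := {v | (H.deleteEdges F).Reachable a v}
  have hSF : edgeBoundary H S ⊆ F := by
    rintro _ ⟨he, u, hu, v, hv, rfl⟩
    by_contra huv
    exact hv (hu.trans (deleteEdges_adj.2 ⟨he, huv⟩).reachable)
  calc k ≤ (edgeBoundary H S).ncard := h S ⟨a, Reachable.refl a⟩ ⟨b, hab⟩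
    _ ≤ F.ncard := Set.ncard_le_ncard hSF (Set.toFinite F)

end EdgeConn

section VertexConn

variable {V : Type*} {G : SimpleGraph V}

lemma nontrivial_of_two_le_vertexConn (h : 2 ≤ vertexConn G) : Nontrivial V := by
  by_contra hV
  rw [not_nontrivial_iff_subsingleton] at hV
  have : vertexConn G ≤ 0 :=
    Nat.sInf_le ⟨∅, Set.ncard_empty V, Or.inr (Set.ncard_le_one_of_subsingleton _)⟩
  omega

lemma connected_induce_compl_singleton_of_two_le_vertexConn (h : 2 ≤ vertexConn G) (x : V) :
    (G.induce ({x}ᶜ : Set V)).Connected := by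
  by_contra hx
  have : vertexConn G ≤ 1 := Nat.sInf_le ⟨{x}, Set.ncard_singleton x, Or.inl hx⟩
  omega

end VertexConn

section ReplacementProduct

variable {V1 V2 : Type*} {G1 : SimpleGraph V1} {G2 : SimpleGraph V2} {ℓ : V1 → V2 → V1}

lemma IsRPLabelling.range_eq_neighborSet [Finite V1] (hℓ : IsRPLabelling G1 ℓ)
    (hdeg : ∀ x, (G1.neighborSet x).ncard = Nat.card V2) (x : V1) :
    Set.range (ℓ x) = G1.neighborSet x :=
  Set.eq_of_subset_of_ncard_le (Set.range_subset_iff.2 (hℓ.2 x))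
    (by rw [hdeg, Set.ncard_range_of_injective (hℓ.1 x)])

lemma adj_apply_of_range_eq_neighborSet (hℓ : ∀ x, Set.range (ℓ x) = G1.neighborSet x)
    (x : V1) (i : V2) : G1.Adj x (ℓ x i) := by
  rw [← mem_neighborSet, ← hℓ x]
  exact Set.mem_range_self i

lemma exists_replacementProduct_adj_apply (hℓ : ∀ x, Set.range (ℓ x) = G1.neighborSet x)
    (x : V1) (i : V2) : ∃ j, (replacementProduct G1 G2 ℓ).Adj (x, i) (ℓ x i, j) := by
  have hx := adj_apply_of_range_eq_neighborSet hℓ x i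
  obtain ⟨j, hj⟩ : x ∈ Set.range (ℓ (ℓ x i)) := by rw [hℓ]; exact hx.symm
  exact ⟨j, Or.inr ⟨hx, rfl, hj⟩⟩

lemma exists_replacementProduct_adj_of_adj (hℓ : ∀ x, Set.range (ℓ x) = G1.neighborSet x)
    {x y : V1} (hxy : G1.Adj x y) : ∃ i j, (replacementProduct G1 G2 ℓ).Adj (x, i) (y, j) := by
  obtain ⟨i, rfl⟩ : y ∈ Set.range (ℓ x) := by rw [hℓ]; exact hxy
  exact ⟨i, exists_replacementProduct_adj_apply hℓ x i⟩

/-- The clouds other than `{x} × V2` are linked through `G1 - x`, and every vertex of the cloud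
of `x` has a neighbour outside it. -/
lemma exists_mem_edgeBoundary_replacementProduct_off_cloud
    (hℓ : ∀ x, Set.range (ℓ x) = G1.neighborSet x) (hG2 : G2.Preconnected) {x : V1}
    (hx : (G1.induce ({x}ᶜ : Set V1)).Preconnected) {A : Set (V1 × V2)}
    (hA : A.Nonempty) (hA' : Aᶜ.Nonempty) :
    ∃ e ∈ edgeBoundary (replacementProduct G1 G2 ℓ) A, ∃ p ∈ e, p.1 ≠ x := by
  set G := replacementProduct G1 G2 ℓ
  by_contra! hcloud
  have hmem : ∀ p q, G.Adj p q → p.1 ≠ x → (p ∈ A ↔ q ∈ A) := by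
    refine fun p q hpq hp => ⟨fun hpA => ?_, fun hqA => ?_⟩
    · by_contra hqA
      exact hp (hcloud _ ⟨hpq, p, hpA, q, hqA, rfl⟩ p (Sym2.mem_mk_left p q))
    · by_contra hpA
      exact hp (hcloud _ ⟨hpq.symm, q, hqA, p, hpA, rfl⟩ p (Sym2.mem_mk_right q p))
  have hfiber : ∀ z ≠ x, ∀ i j, (z, i) ∈ A → (z, j) ∈ A := fun z hz i j =>
    (hG2 i j).mem_of_closed_under_adj (A := {k | (z, k) ∈ A})
      fun k m hkm => (hmem (z, k) (z, m) (Or.inl ⟨rfl, hkm⟩) hz).1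
  have hoff : ∀ z w, z ≠ x → w ≠ x → ∀ i j, (z, i) ∈ A → (w, j) ∈ A := by
    intro z w hz hw i j hzi
    refine (hx ⟨z, hz⟩ ⟨w, hw⟩).mem_of_closed_under_adj
      (A := {u | ∀ k, (u.1, k) ∈ A}) ?_ (fun k => hfiber z hz i k hzi) j
    rintro u v huv hu k
    obtain ⟨i', j', huv'⟩ :=
      exists_replacementProduct_adj_of_adj (G2 := G2) hℓ (comap_adj.1 huv)
    exact hfiber v.1 v.2 j' k ((hmem _ _ huv' u.2).1 (hu i'))
  have hrep : ∀ p, ∃ q : V1 × V2, q.1 ≠ x ∧ (p ∈ A ↔ q ∈ A) := by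
    rintro ⟨z, i⟩
    by_cases hz : z = x
    · subst hz
      obtain ⟨j, hzj⟩ := exists_replacementProduct_adj_apply (G2 := G2) hℓ z i
      have hne := (adj_apply_of_range_eq_neighborSet hℓ z i).ne.symm
      exact ⟨_, hne, (hmem _ _ hzj.symm hne).symm⟩
    · exact ⟨(z, i), hz, Iff.rfl⟩
  obtain ⟨a, ha⟩ := hA
  obtain ⟨b, hb⟩ := hA'
  obtain ⟨a', ha', haa'⟩ := hrep a
  obtain ⟨b', hb', hbb'⟩ := hrep b
  exact hb (hbb'.2 (hoff _ _ ha' hb' _ _ (haa'.1 ha)))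

lemma edgeConn_add_one_le_ncard_edgeBoundary_replacementProduct [Finite V1] [Finite V2]
    (hℓ : ∀ x, Set.range (ℓ x) = G1.neighborSet x) (hG2 : G2.Preconnected) {x : V1}
    (hx : (G1.induce ({x}ᶜ : Set V1)).Preconnected) {A : Set (V1 × V2)} {i j : V2}
    (hi : (x, i) ∈ A) (hj : (x, j) ∉ A) :
    edgeConn G2 + 1 ≤ (edgeBoundary (replacementProduct G1 G2 ℓ) A).ncard := by
  set S : Set V2 := {k | (x, k) ∈ A}
  have hsub :
      Sym2.map (x, ·) '' edgeBoundary G2 S ⊂ edgeBoundary (replacementProduct G1 G2 ℓ) A := by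
    obtain ⟨e, he, p, hpe, hp⟩ :=
      exists_mem_edgeBoundary_replacementProduct_off_cloud hℓ hG2 hx ⟨_, hi⟩ ⟨_, hj⟩
    refine (Set.ssubset_iff_of_subset ?_).2 ⟨e, he, ?_⟩
    · rintro _ ⟨_, ⟨hkm, k, hk, m, hm, rfl⟩, rfl⟩
      exact ⟨Or.inl ⟨rfl, hkm⟩, (x, k), hk, (x, m), hm, rfl⟩
    · rintro ⟨e', -, rfl⟩
      obtain ⟨k, -, rfl⟩ := Sym2.mem_map.1 hpe
      exact hp rfl
  calc edgeConn G2 + 1 ≤ (edgeBoundary G2 S).ncard + 1 := by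
        gcongr; exact edgeConn_le_ncard_edgeBoundary ⟨i, hi⟩ ⟨j, hj⟩
    _ = (Sym2.map (x, ·) '' edgeBoundary G2 S).ncard + 1 := by
        rw [Set.ncard_image_of_injective _ (Sym2.map.injective (Prod.mk_right_injective x))]
    _ ≤ _ := Set.ncard_lt_ncard hsub

lemma edgeConn_le_ncard_edgeBoundary_replacementProduct [Finite V1] [Finite V2]
    (hℓ : ∀ x, Set.range (ℓ x) = G1.neighborSet x) {A : Set (V1 × V2)}
    (hA : A.Nonempty) (hA' : Aᶜ.Nonempty) (hcloud : ∀ z i j, (z, i) ∈ A → (z, j) ∈ A) :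
    edgeConn G1 ≤ (edgeBoundary (replacementProduct G1 G2 ℓ) A).ncard := by
  obtain ⟨a, ha⟩ := hA
  obtain ⟨⟨b₁, b₂⟩, hb⟩ := hA'
  have hsub : edgeBoundary G1 (Prod.fst '' A) ⊆
      Sym2.map Prod.fst '' edgeBoundary (replacementProduct G1 G2 ℓ) A := by
    rintro _ ⟨hzw, _, ⟨⟨z, k⟩, hk, rfl⟩, w, hw, rfl⟩
    obtain ⟨i, j, hadj⟩ := exists_replacementProduct_adj_of_adj (G2 := G2) hℓ hzw
    exact ⟨s((z, i), (w, j)),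
      ⟨hadj, _, hcloud _ _ _ hk, _, fun hwj => hw ⟨_, hwj, rfl⟩, rfl⟩, rfl⟩
  calc edgeConn G1 ≤ (edgeBoundary G1 (Prod.fst '' A)).ncard :=
        edgeConn_le_ncard_edgeBoundary ⟨a.1, a, ha, rfl⟩
          ⟨b₁, fun ⟨⟨z, k⟩, hk, (hz : z = b₁)⟩ => hb (hz ▸ hcloud z k b₂ hk)⟩
    _ ≤ (Sym2.map Prod.fst '' edgeBoundary (replacementProduct G1 G2 ℓ) A).ncard :=
        Set.ncard_le_ncard hsub (Set.toFinite _)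
    _ ≤ _ := Set.ncard_image_le (Set.toFinite _)

lemma min_edgeConn_le_ncard_edgeBoundary_replacementProduct [Finite V1] [Finite V2]
    (hℓ : ∀ x, Set.range (ℓ x) = G1.neighborSet x) (hG2 : G2.Preconnected)
    (hG1 : ∀ x, (G1.induce ({x}ᶜ : Set V1)).Preconnected) {A : Set (V1 × V2)}
    (hA : A.Nonempty) (hA' : Aᶜ.Nonempty) :
    min (edgeConn G1) (edgeConn G2 + 1) ≤
      (edgeBoundary (replacementProduct G1 G2 ℓ) A).ncard := by
  by_cases hsplit : ∃ x i j, (x, i) ∈ A ∧ (x, j) ∉ A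
  · obtain ⟨x, i, j, hi, hj⟩ := hsplit
    exact min_le_of_right_le
      (edgeConn_add_one_le_ncard_edgeBoundary_replacementProduct hℓ hG2 (hG1 x) hi hj)
  · push Not at hsplit
    exact min_le_of_left_le
      (edgeConn_le_ncard_edgeBoundary_replacementProduct hℓ hA hA' hsplit)

end ReplacementProduct

theorem edgeConn_replacementProduct_lower_bound_of_two_connected_general
    {V1 V2 : Type*} [Fintype V1] [Fintype V2] {δ1 : ℕ}
    (G1 : SimpleGraph V1) (G2 : SimpleGraph V2) (ℓ : V1 → V2 → V1)
    (hℓ : IsRPLabelling G1 ℓ)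
    (hc2 : G2.Connected)
    (hr1 : ∀ x : V1, (G1.neighborSet x).ncard = δ1)
    (hd : Fintype.card V2 = δ1)
    (hκ : 2 ≤ vertexConn G1) :
    min (edgeConn G1) (edgeConn G2 + 1) ≤ edgeConn (replacementProduct G1 G2 ℓ) := by
  have hrange := hℓ.range_eq_neighborSet fun x => by rw [hr1, Nat.card_eq_fintype_card, hd]
  have : Nontrivial V1 := nontrivial_of_two_le_vertexConn hκ
  have : Nonempty V2 := hc2.nonempty
  exact le_edgeConn_of_forall_edgeBoundary fun A hA hA' =>
    min_edgeConn_le_ncard_edgeBoundary_replacementProduct hrange hc2.preconnected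
      (fun x => (connected_induce_compl_singleton_of_two_le_vertexConn hκ x).preconnected) hA hA'

/-- Theorem 3.1, bound (3.2). If `G1` is a connected `δ1`-regular graph
on `n` vertices and `G2` is a connected `δ2`-regular graph on `δ1` vertices, and
`κ(G1) ≥ 2`, then `min {λ1, λ2 + 1} ≤ λ(G1 ® G2)`. -/
theorem edgeConn_replacementProduct_lower_bound_of_two_connected
    {V1 V2 : Type*} [Fintype V1] [Fintype V2] {n δ1 δ2 : ℕ}
    (G1 : SimpleGraph V1) (G2 : SimpleGraph V2) (ℓ : V1 → V2 → V1)
    (hℓ : IsRPLabelling G1 ℓ)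
    (hc1 : G1.Connected) (hc2 : G2.Connected)
    (hr1 : ∀ x : V1, (G1.neighborSet x).ncard = δ1)
    (hr2 : ∀ i : V2, (G2.neighborSet i).ncard = δ2)
    (hn : Fintype.card V1 = n) (hd : Fintype.card V2 = δ1)
    (hκ : 2 ≤ vertexConn G1) :
    min (edgeConn G1) (edgeConn G2 + 1) ≤ edgeConn (replacementProduct G1 G2 ℓ) :=
  edgeConn_replacementProduct_lower_bound_of_two_connected_general G1 G2 ℓ hℓ hc2 hr1 hd hκ
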